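/- arXiv:2404.00430 — 3 statements merged into one kernel-verified Lean document; each statement's English description precedes it below -/
import Mathlib

section
/- Let d ≥ 2 and q ∈ (2, ∞). Then V_q(𝒜^1) is unbounded on L^∞(ℝ^d): for every constant C > 0 there exists a bounded measurable, compactly supported function f : ℝ^d → ℝ with ‖f‖_{L^∞(ℝ^d)} > 0 such that the essential supremum over x ∈ ℝ^d of V_q(𝒜^1 f)(x) exceeds C ‖f‖_{L^∞(ℝ^d)}. -/
noncomputable section
open MeasureTheory Complex
open scoped ENNReal NNReal

/-- Generalized spherical mean `A_t^α f (x) = (1/Γ(α)) ∫_{|y|≤1} (1-|y|²)^(α-1) f(x-ty) dy`. -/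
def sphAvg (d : ℕ) (α : ℂ) (f : EuclideanSpace ℝ (Fin d) → ℂ) (t : ℝ)
    (x : EuclideanSpace ℝ (Fin d)) : ℂ :=
  (Complex.Gamma α)⁻¹ *
    ∫ y in Metric.closedBall (0 : EuclideanSpace ℝ (Fin d)) 1,
      ((1 : ℂ) - (‖y‖ : ℂ) ^ 2) ^ (α - 1) * f (x - t • y)

/-- The `q`-variation norm of a family `{a_t}_{t>0}`. -/
def vqNorm (q : ℝ) (a : ℝ → ℂ) : ℝ≥0∞ :=
  ⨆ (L : ℕ) (t : Fin (L + 1) → ℝ) (_ : StrictMono t) (_ : ∀ i, 0 < t i),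
    ENNReal.ofReal ((∑ i : Fin L, ‖a (t i.succ) - a (t i.castSucc)‖ ^ q) ^ (1 / q))

/-- `L^p` norm of an `ℝ≥0∞`-valued function. -/
def lpNormE {X : Type*} [MeasurableSpace X] (p : ℝ) (μ : Measure X) (g : X → ℝ≥0∞) : ℝ≥0∞ :=
  (∫⁻ x, g x ^ p ∂μ) ^ (1 / p)

/-! Let `f` be `(-1)^j` on the shell `4^(j-1) < ‖z‖ ≤ 4^j` of the unit ball and `0` outside it.
If `‖x‖ ≤ 4^j ε` with `ε = 1/(16d)`, then `x - 4^j y` lies in the `j`-th shell for every `y` of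
the unit ball `B` except the core `‖y‖ ≤ 1/4 + ε` and the rim `‖y‖ > 1 - ε`, which together fill
at most `3/8` of `B`. Hence `A_{4^j} f(x)` is within `3|B|/4` of `(-1)^j |B|`, consecutive scales
`4^(j-1), 4^j` differ by at least `|B|/2`, and on the ball `‖x‖ < 4^(-m) ε` the scales
`4^(-m), …, 1` give `V_q(𝒜^1 f)(x) ≥ m^(1/q) |B|/2`. So the essential supremum is infinite while
`‖f‖_∞ = 1`. -/

open Metric Set Filter

section AlternatingShells

variable {E : Type*} [NormedAddCommGroup E]

def alternatingShells (z : E) : ℝ :=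
  (closedBall (0 : E) 1).indicator (fun z => (-1) ^ ⌈Real.logb 4 ‖z‖⌉) z

theorem ceil_logb_eq_of_zpow_sub_one_lt_of_le {b : ℕ} (hb : 1 < b) {j : ℤ} {r : ℝ}
    (h₁ : (b : ℝ) ^ (j - 1) < r) (h₂ : r ≤ (b : ℝ) ^ j) : ⌈Real.logb b r⌉ = j := by
  have hr : 0 < r := (zpow_pos (by positivity) _).trans h₁
  rw [Real.ceil_logb_natCast hr.le]
  refine le_antisymm ((Int.le_zpow_iff_clog_le hb hr).1 h₂) ?_
  have hlt := (Int.zpow_lt_iff_lt_clog hb hr).1 h₁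
  omega

theorem alternatingShells_eq_neg_one_zpow {j : ℤ} (hj : j ≤ 0) {z : E}
    (h₁ : (4 : ℝ) ^ (j - 1) < ‖z‖) (h₂ : ‖z‖ ≤ 4 ^ j) :
    alternatingShells z = (-1) ^ j := by
  have hz : z ∈ closedBall (0 : E) 1 :=
    mem_closedBall_zero_iff.2 (h₂.trans (zpow_le_one_of_nonpos₀ (by norm_num) hj))
  have hlog := ceil_logb_eq_of_zpow_sub_one_lt_of_le (b := 4) (by norm_num)
    (by exact_mod_cast h₁) (by exact_mod_cast h₂)
  rw [Nat.cast_ofNat] at hlog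
  rw [alternatingShells, indicator_of_mem hz, hlog]

theorem abs_alternatingShells_le (z : E) : |alternatingShells z| ≤ 1 := by
  rw [← Real.norm_eq_abs, alternatingShells]
  exact (norm_indicator_le_norm_self _ _).trans_eq (abs_neg_one_zpow _)

theorem alternatingShells_ne_zero {z : E} (hz : z ∈ closedBall (0 : E) 1) :
    alternatingShells z ≠ 0 := by
  rw [alternatingShells, indicator_of_mem hz]
  exact zpow_ne_zero _ (by norm_num)

@[fun_prop]
theorem measurable_alternatingShells [MeasurableSpace E] [OpensMeasurableSpace E] :
    Measurable (alternatingShells (E := E)) :=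
  (Measurable.of_discrete.comp
    ((Real.measurable_log.comp measurable_norm).div_const _).ceil).indicator
    measurableSet_closedBall

theorem hasCompactSupport_alternatingShells [ProperSpace E] :
    HasCompactSupport (alternatingShells (E := E)) :=
  HasCompactSupport.intro (isCompact_closedBall 0 1) fun _ hz => indicator_of_notMem hz _

end AlternatingShells

theorem norm_sub_smul_mem_Ioc {E : Type*} [NormedAddCommGroup E] [NormedSpace ℝ E]
    {x y : E} {t ε : ℝ} (ht : 0 < t) (hx : ‖x‖ ≤ t * ε) (hy₁ : 1 / 4 + ε < ‖y‖)
    (hy₂ : ‖y‖ ≤ 1 - ε) : ‖x - t • y‖ ∈ Ioc (t / 4) t := by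
  have hty : ‖t • y‖ = t * ‖y‖ := by rw [norm_smul, Real.norm_of_nonneg ht.le]
  have hlow := norm_sub_norm_le (t • y) x
  have hupp := norm_sub_le x (t • y)
  rw [norm_sub_rev, hty] at hlow
  rw [hty] at hupp
  constructor <;> nlinarith

theorem norm_setIntegral_sub_measureReal_smul_le {α F : Type*} [MeasurableSpace α]
    [NormedAddCommGroup F] [NormedSpace ℝ F] [CompleteSpace F] {μ : Measure α} {s t : Set α}
    {g : α → F} {c : F} {M : ℝ} (hs : MeasurableSet s) (hμs : μ s ≠ ⊤)
    (hg : AEStronglyMeasurable g μ) (hgM : ∀ y ∈ s, ‖g y - c‖ ≤ M) (hgc : ∀ y ∈ t, g y = c) :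
    ‖∫ y in s, g y ∂μ - μ.real s • c‖ ≤ M * μ.real (s \ t) := by
  have hint : IntegrableOn (fun y => g y - c) s μ :=
    Measure.integrableOn_of_bounded hμs (hg.sub aestronglyMeasurable_const)
      ((ae_restrict_iff' hs).2 (Eventually.of_forall hgM))
  have hdiff : ∫ y in s, g y ∂μ - μ.real s • c = ∫ y in s \ t, (g y - c) ∂μ := by
    have hgs : IntegrableOn g s μ :=
      (hint.add (integrableOn_const hμs)).congr_fun (fun y _ => sub_add_cancel (g y) c) hs
    rw [← setIntegral_const, ← integral_sub hgs (integrableOn_const hμs)]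
    refine setIntegral_eq_of_subset_of_forall_sdiff_eq_zero hs sdiff_subset ?_
    intro y hy
    rw [hgc y (not_not.1 fun h => hy.2 ⟨hy.1, h⟩), sub_self]
  rw [hdiff]
  exact norm_setIntegral_le_of_norm_le_const ((measure_mono sdiff_subset).trans_lt hμs.lt_top)
    fun y hy => hgM y hy.1

theorem measureReal_closedBall_diff_annulus_le {E : Type*} [NormedAddCommGroup E]
    [NormedSpace ℝ E] [MeasurableSpace E] [BorelSpace E] [FiniteDimensional ℝ E]
    (μ : Measure E) [μ.IsAddHaarMeasure] {a b : ℝ} (ha : 0 ≤ a) (hb : 0 ≤ b) (hb₁ : b ≤ 1) :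
    μ.real (closedBall 0 1 \ (closedBall 0 b \ closedBall 0 a)) ≤
      (1 - b ^ Module.finrank ℝ E + a ^ Module.finrank ℝ E) * μ.real (closedBall (0 : E) 1) := by
  have hsub : closedBall (0 : E) 1 \ (closedBall 0 b \ closedBall 0 a) ⊆
      (closedBall 0 1 \ closedBall 0 b) ∪ closedBall 0 a := by
    intro y ⟨hy1, hy2⟩
    by_cases h : y ∈ closedBall (0 : E) a
    · exact Or.inr h
    · exact Or.inl ⟨hy1, fun hb => hy2 ⟨hb, h⟩⟩
  have hfin : μ ((closedBall 0 1 \ closedBall 0 b) ∪ closedBall 0 a) ≠ ⊤ :=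
    measure_union_ne_top (measure_mono sdiff_subset |>.trans_lt measure_closedBall_lt_top).ne
      measure_closedBall_lt_top.ne
  calc _ ≤ μ.real ((closedBall 0 1 \ closedBall 0 b) ∪ closedBall 0 a) :=
        measureReal_mono hsub hfin
    _ ≤ μ.real (closedBall 0 1 \ closedBall 0 b) + μ.real (closedBall (0 : E) a) :=
      measureReal_union_le _ _
    _ = _ := by
      rw [measureReal_sdiff (closedBall_subset_closedBall hb₁) measurableSet_closedBall
        measure_closedBall_lt_top.ne, Measure.addHaar_real_closedBall' μ 0 hb,
        Measure.addHaar_real_closedBall' μ 0 ha]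
      ring

theorem one_sub_pow_add_pow_le_three_eighths {n : ℕ} (hn : 0 < n) :
    1 - (1 - (16 * n : ℝ)⁻¹) ^ n + (1 / 4 + (16 * n : ℝ)⁻¹) ^ n ≤ 3 / 8 := by
  have hn' : (1 : ℝ) ≤ n := by exact_mod_cast hn
  have hε : (16 * n : ℝ)⁻¹ ≤ 1 / 16 := by
    rw [inv_le_comm₀ (by positivity) (by norm_num)]; linarith
  have hbern : 1 - 1 / 16 ≤ (1 - (16 * n : ℝ)⁻¹) ^ n := by
    have hb := one_add_mul_le_pow (a := -(16 * n : ℝ)⁻¹) (by linarith) n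
    have hn16 : (n : ℝ) * (16 * (n : ℝ))⁻¹ = 1 / 16 := by field_simp
    rwa [mul_neg, hn16, ← sub_eq_add_neg, ← sub_eq_add_neg] at hb
  have hsmall : (1 / 4 + (16 * n : ℝ)⁻¹) ^ n ≤ 1 / 4 + 1 / 16 :=
    (pow_le_of_le_one (by positivity) (by linarith) hn.ne').trans (by linarith)
  linarith

theorem vqNorm_ge_of_forall_jump {q : ℝ} (hq : 0 < q) {a : ℝ → ℂ} {L : ℕ}
    {t : Fin (L + 1) → ℝ} (ht : StrictMono t) (ht₀ : ∀ i, 0 < t i) {δ : ℝ} (hδ : 0 ≤ δ)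
    (hjump : ∀ i : Fin L, δ ≤ ‖a (t i.succ) - a (t i.castSucc)‖) :
    ENNReal.ofReal ((L : ℝ) ^ (1 / q) * δ) ≤ vqNorm q a := by
  have hsum : (L : ℝ) * δ ^ q ≤ ∑ i : Fin L, ‖a (t i.succ) - a (t i.castSucc)‖ ^ q := by
    simpa using Finset.card_nsmul_le_sum Finset.univ _ _
      fun i _ => Real.rpow_le_rpow hδ (hjump i) hq.le
  have hroot : ((L : ℝ) * δ ^ q) ^ (1 / q) = (L : ℝ) ^ (1 / q) * δ := by
    rw [Real.mul_rpow (Nat.cast_nonneg L) (Real.rpow_nonneg hδ q),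
      one_div, Real.rpow_rpow_inv hδ hq.ne']
  refine le_iSup_of_le L <| le_iSup_of_le t <| le_iSup_of_le ht <| le_iSup_of_le ht₀ ?_
  rw [← hroot]
  exact ENNReal.ofReal_le_ofReal (Real.rpow_le_rpow (by positivity) hsum (by positivity))

theorem le_essSup_of_forall_mem {α β : Type*} [MeasurableSpace α] [CompleteLinearOrder β]
    {μ : Measure α} {f : α → β} {s : Set α} {c : β} (hs : μ s ≠ 0) (hf : ∀ x ∈ s, c ≤ f x) :
    c ≤ essSup f μ := by
  by_contra! h
  refine hs (measure_mono_null (fun x hx => ?_) (ae_iff.1 (ae_lt_of_essSup_lt h)))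
  exact not_lt.2 (hf x hx)

section SphericalMean

variable {d : ℕ}

local notation "ω" => volume.real (closedBall (0 : EuclideanSpace ℝ (Fin d)) 1)

local notation "𝒜" => sphAvg d 1 (fun y => ((alternatingShells y : ℝ) : ℂ))

theorem sphAvg_one_eq_setIntegral (f : EuclideanSpace ℝ (Fin d) → ℂ) (t : ℝ)
    (x : EuclideanSpace ℝ (Fin d)) :
    sphAvg d 1 f t x = ∫ y in closedBall (0 : EuclideanSpace ℝ (Fin d)) 1, f (x - t • y) := by
  simp [sphAvg]

theorem norm_sphAvg_alternatingShells_sub_le (hd : 0 < d) {j : ℤ} (hj : j ≤ 0)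
    {x : EuclideanSpace ℝ (Fin d)} (hx : ‖x‖ ≤ 4 ^ j * (16 * d : ℝ)⁻¹) :
    ‖𝒜 (4 ^ j) x - ω • (((-1 : ℝ) ^ j : ℝ) : ℂ)‖ ≤ 3 / 4 * ω := by
  set ε : ℝ := (16 * d : ℝ)⁻¹
  have hε : 0 ≤ ε := by positivity
  have hε₁ : ε ≤ 1 := inv_le_one_of_one_le₀ (by norm_cast; omega)
  have hbound : ∀ y ∈ closedBall (0 : EuclideanSpace ℝ (Fin d)) 1,
      ‖(alternatingShells (x - (4 : ℝ) ^ j • y) : ℂ) - (((-1 : ℝ) ^ j : ℝ) : ℂ)‖ ≤ 2 := by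
    intro y _
    refine (norm_sub_le _ _).trans ?_
    simp only [Complex.norm_real, Real.norm_eq_abs, abs_neg_one_zpow]
    linarith [abs_alternatingShells_le (x - (4 : ℝ) ^ j • y)]
  have hgood : ∀ y ∈ closedBall (0 : EuclideanSpace ℝ (Fin d)) (1 - ε) \ closedBall 0 (1 / 4 + ε),
      (alternatingShells (x - (4 : ℝ) ^ j • y) : ℂ) = (((-1 : ℝ) ^ j : ℝ) : ℂ) := by
    rintro y ⟨hy₂, hy₁⟩
    rw [mem_closedBall_zero_iff] at hy₂
    rw [mem_closedBall_zero_iff, not_le] at hy₁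
    obtain ⟨hlow, hupp⟩ := norm_sub_smul_mem_Ioc (by positivity) hx hy₁ hy₂
    rw [div_eq_mul_inv, ← zpow_sub_one₀ (by norm_num)] at hlow
    rw [alternatingShells_eq_neg_one_zpow hj hlow hupp]
  have hbad := measureReal_closedBall_diff_annulus_le (volume : Measure (EuclideanSpace ℝ (Fin d)))
    (by positivity : 0 ≤ 1 / 4 + ε) (by linarith : 0 ≤ 1 - ε) (by linarith : 1 - ε ≤ 1)
  rw [finrank_euclideanSpace_fin] at hbad
  rw [sphAvg_one_eq_setIntegral]
  calc _ ≤ 2 * volume.real (closedBall (0 : EuclideanSpace ℝ (Fin d)) 1 \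
        (closedBall 0 (1 - ε) \ closedBall 0 (1 / 4 + ε))) :=
      norm_setIntegral_sub_measureReal_smul_le measurableSet_closedBall
        measure_closedBall_lt_top.ne (by fun_prop : Measurable _).aestronglyMeasurable hbound hgood
    _ ≤ 3 / 4 * ω := by
      nlinarith [one_sub_pow_add_pow_le_three_eighths hd, measureReal_nonneg (μ := volume)
        (s := closedBall (0 : EuclideanSpace ℝ (Fin d)) 1)]

theorem sphAvg_alternatingShells_jump (hd : 0 < d) {j : ℤ} (hj : j ≤ 0)
    {x : EuclideanSpace ℝ (Fin d)} (hx : ‖x‖ ≤ 4 ^ (j - 1) * (16 * d : ℝ)⁻¹) :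
    ω / 2 ≤ ‖𝒜 (4 ^ j) x - 𝒜 (4 ^ (j - 1)) x‖ := by
  set u := ω • (((-1 : ℝ) ^ j : ℝ) : ℂ)
  set v := ω • (((-1 : ℝ) ^ (j - 1) : ℝ) : ℂ)
  have hx' : ‖x‖ ≤ 4 ^ j * (16 * d : ℝ)⁻¹ := hx.trans (by gcongr <;> [norm_num; omega])
  have hu := norm_sphAvg_alternatingShells_sub_le hd hj hx'
  have hv := norm_sphAvg_alternatingShells_sub_le hd (by omega : j - 1 ≤ 0) hx
  have huv : ‖u - v‖ = 2 * ω := by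
    rw [← smul_sub, norm_smul, Real.norm_of_nonneg measureReal_nonneg, ← Complex.ofReal_sub,
      Complex.norm_real, zpow_sub_one₀ (by norm_num),
      show (-1 : ℝ) ^ j - (-1) ^ j * (-1)⁻¹ = 2 * (-1) ^ j by ring, norm_mul]
    norm_num [mul_comm]
  have htri₁ := norm_sub_le_norm_sub_add_norm_sub u (𝒜 (4 ^ j) x) v
  have htri₂ := norm_sub_le_norm_sub_add_norm_sub (𝒜 (4 ^ j) x) (𝒜 (4 ^ (j - 1)) x) v
  rw [norm_sub_rev] at hu
  linarith

theorem vqNorm_sphAvg_alternatingShells_ge (hd : 0 < d) {q : ℝ} (hq : 0 < q) (m : ℕ)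
    {x : EuclideanSpace ℝ (Fin d)} (hx : ‖x‖ ≤ 4 ^ (-(m : ℤ)) * (16 * d : ℝ)⁻¹) :
    ENNReal.ofReal ((m : ℝ) ^ (1 / q) * (ω / 2)) ≤ vqNorm q (fun t => 𝒜 t x) := by
  refine vqNorm_ge_of_forall_jump (t := fun i : Fin (m + 1) => (4 : ℝ) ^ ((i : ℤ) - m)) hq
    (fun i j hij => zpow_lt_zpow_right₀ (by norm_num) (by simpa using hij))
    (fun _ => by positivity) (by positivity) fun i => ?_
  have hj : ((i.succ : ℕ) : ℤ) - m ≤ 0 := by simp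
  have hx' : ‖x‖ ≤ 4 ^ (((i.succ : ℕ) : ℤ) - m - 1) * (16 * d : ℝ)⁻¹ :=
    hx.trans (by gcongr <;> [norm_num; simp])
  convert sphAvg_alternatingShells_jump hd hj hx' using 5
  simp only [Fin.val_castSucc, Fin.val_succ, Nat.cast_add, Nat.cast_one]
  ring

theorem essSup_vqNorm_sphAvg_alternatingShells_eq_top (hd : 0 < d) {q : ℝ} (hq : 0 < q) :
    essSup (fun x => vqNorm q (fun t => 𝒜 t x)) volume = ⊤ := by
  refine ENNReal.eq_top_of_forall_nnreal_le fun r => ?_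
  have hω : 0 < ω :=
    ENNReal.toReal_pos (measure_closedBall_pos _ _ one_pos).ne' measure_closedBall_lt_top.ne
  obtain ⟨m, hm⟩ : ∃ m : ℕ, (r : ℝ) ≤ (m : ℝ) ^ (1 / q) * (ω / 2) :=
    ((((tendsto_rpow_atTop (by positivity)).comp tendsto_natCast_atTop_atTop).atTop_mul_const
      (by positivity)).eventually_ge_atTop _).exists
  refine le_essSup_of_forall_mem (s := ball 0 (4 ^ (-(m : ℤ)) * (16 * d : ℝ)⁻¹))
    (measure_ball_pos _ _ (by positivity)).ne' fun x hx => ?_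
  exact ENNReal.ofReal_coe_nnreal.symm.trans_le (ENNReal.ofReal_le_ofReal hm) |>.trans
    (vqNorm_sphAvg_alternatingShells_ge hd hq m (mem_ball_zero_iff.1 hx).le)

end SphericalMean

theorem eLpNorm_alternatingShells_pos {E : Type*} [NormedAddCommGroup E] [MeasurableSpace E]
    [BorelSpace E] {μ : Measure E} [μ.IsOpenPosMeasure] {p : ℝ≥0∞} (hp : p ≠ 0) :
    0 < eLpNorm alternatingShells p μ := by
  refine pos_iff_ne_zero.2 fun h => (measure_ball_pos μ (0 : E) one_pos).ne' ?_
  have hzero := (eLpNorm_eq_zero_iff measurable_alternatingShells.aestronglyMeasurable hp).1 h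
  exact measure_mono_null (fun z hz => alternatingShells_ne_zero (ball_subset_closedBall hz))
    (ae_iff.1 hzero)

theorem variation_unbounded_Linfty_alpha_one (d : ℕ) (hd : 2 ≤ d) (q : ℝ) (hq1 : 2 < q) :
    ∀ C > 0, ∃ f : EuclideanSpace ℝ (Fin d) → ℝ,
      Measurable f ∧ HasCompactSupport f ∧ (∃ M : ℝ, ∀ x, |f x| ≤ M) ∧
      0 < eLpNorm f ∞ volume ∧
      ENNReal.ofReal C * eLpNorm f ∞ volume <
        essSup (fun x => vqNorm q (fun t => sphAvg d 1 (fun y => (f y : ℂ)) t x)) volume := by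
  intro C _
  refine ⟨alternatingShells, measurable_alternatingShells, hasCompactSupport_alternatingShells,
    ⟨1, abs_alternatingShells_le⟩, eLpNorm_alternatingShells_pos ENNReal.top_ne_zero, ?_⟩
  rw [essSup_vqNorm_sphAvg_alternatingShells_eq_top (by omega) (by linarith)]
  have hbdd : MemLp (alternatingShells (E := EuclideanSpace ℝ (Fin d))) ∞ volume :=
    memLp_top_of_bound measurable_alternatingShells.aestronglyMeasurable 1
      (ae_of_all _ abs_alternatingShells_le)
  exact ENNReal.mul_lt_top ENNReal.ofReal_lt_top hbdd.eLpNorm_lt_top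
end
end

section
/- Let d ≥ 2, let q ∈ (2, ∞), and let α ∈ ℂ with Re α > 0 and α ≠ 1. Then V_q(𝒜^α) is unbounded on L^∞(ℝ^d): for every constant C > 0 there exists a bounded measurable, compactly supported function f : ℝ^d → ℂ with ‖f‖_{L^∞(ℝ^d)} > 0 such that the essential supremum over x ∈ ℝ^d of V_q(𝒜^α f)(x) exceeds C ‖f‖_{L^∞(ℝ^d)}. -/
noncomputable section
open MeasureTheory Complex
open scoped ENNReal NNReal

/-! The witness is `f u = ‖u‖ ^ I` on the unit ball. Since `f (t • u) = t ^ I * f u` for `t ≤ 1`,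
`A_t^α f (0) = t ^ I * κ`, and polar coordinates followed by `u = r ^ 2` identify `κ` with a
nonzero multiple of the Beta integral `B((d + I) / 2, α)`. Along scales with ratio `e ^ π` the
factor `t ^ I` alternates in sign, so consecutive differences of `A_t^α f (0)` have size `2 ‖κ‖`.
Each `A_t^α f` is continuous at `0` (a bounded function, continuous off the origin, against an
integrable kernel), so near `0` these differences exceed `‖κ‖`: on a set of positive measure the
`q`-variation is at least `L ^ (1 / q) * ‖κ‖`, unbounded in `L`, while `‖f‖_∞ ≤ 1`. -/

open Set Metric
open scoped Real Topology

section BetaSubstitution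

variable {n : ℕ}

lemma smul_indicator_Ioo_comp_rpow_two (hn : 1 ≤ n) (α γ : ℂ) {r : ℝ} (hr : 0 < r) :
    (|(2 : ℝ)| * r ^ ((2 : ℝ) - 1)) • (Ioo 0 1).indicator
        (fun u : ℝ => (2 : ℝ)⁻¹ • ((u : ℂ) ^ ((n + γ) / 2 - 1) * (1 - (u : ℂ)) ^ (α - 1)))
        (r ^ (2 : ℝ))
      = (Ioo 0 1).indicator
        (fun r : ℝ => r ^ (n - 1) • ((1 - (r : ℂ) ^ 2) ^ (α - 1) * (r : ℂ) ^ γ)) r := by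
  have hmem : r ^ (2 : ℝ) ∈ Ioo (0 : ℝ) 1 ↔ r ∈ Ioo (0 : ℝ) 1 := by
    norm_cast
    simp only [mem_Ioo, hr, true_and, pow_pos hr, pow_lt_one_iff_of_nonneg hr.le two_ne_zero]
  by_cases h : r ∈ Ioo (0 : ℝ) 1
  · rw [indicator_of_mem (hmem.2 h), indicator_of_mem h]
    have hr0 : (r : ℂ) ≠ 0 := by exact_mod_cast hr.ne'
    have hpow : ((r ^ (2 : ℝ) : ℝ) : ℂ) ^ ((n + γ) / 2 - 1) * r
        = (r : ℂ) ^ (n - 1 : ℕ) * (r : ℂ) ^ γ := by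
      rw [← cpow_mul_ofReal_nonneg hr.le, ← cpow_natCast, ← cpow_add _ _ hr0]
      nth_rewrite 2 [← cpow_one (r : ℂ)]
      rw [← cpow_add _ _ hr0]
      congr 1
      push_cast [hn]
      ring
    have hsq : ((r ^ (2 : ℝ) : ℝ) : ℂ) = (r : ℂ) ^ 2 := by norm_cast
    simp only [real_smul, abs_two, show (2 : ℝ) - 1 = 1 by norm_num, Real.rpow_one, ofReal_mul,
      ofReal_inv, ofReal_pow, ofReal_ofNat]
    rw [← hsq]
    linear_combination (1 - ((r ^ (2 : ℝ) : ℝ) : ℂ)) ^ (α - 1) * hpow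
  · rw [indicator_of_notMem (mt hmem.1 h), indicator_of_notMem h, smul_zero]

lemma integral_Ioo_pow_smul_one_sub_sq_cpow_mul_cpow (hn : 1 ≤ n) (α γ : ℂ) :
    ∫ r in Ioo (0 : ℝ) 1, r ^ (n - 1) • ((1 - (r : ℂ) ^ 2) ^ (α - 1) * (r : ℂ) ^ γ)
      = (2 : ℝ)⁻¹ • betaIntegral ((n + γ) / 2) α := by
  have hIoo : Ioi (0 : ℝ) ∩ Ioo 0 1 = Ioo 0 1 := inter_eq_right.2 Ioo_subset_Ioi_self
  calc ∫ r in Ioo (0 : ℝ) 1, r ^ (n - 1) • ((1 - (r : ℂ) ^ 2) ^ (α - 1) * (r : ℂ) ^ γ)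
      = ∫ r in Ioi (0 : ℝ), (Ioo 0 1).indicator
          (fun r : ℝ => r ^ (n - 1) • ((1 - (r : ℂ) ^ 2) ^ (α - 1) * (r : ℂ) ^ γ)) r := by
        rw [setIntegral_indicator measurableSet_Ioo, hIoo]
    _ = ∫ u in Ioi (0 : ℝ), (Ioo 0 1).indicator
          (fun u : ℝ => (2 : ℝ)⁻¹ • ((u : ℂ) ^ ((n + γ) / 2 - 1) * (1 - (u : ℂ)) ^ (α - 1))) u :=
        (setIntegral_congr_fun measurableSet_Ioi fun _ hr =>
          (smul_indicator_Ioo_comp_rpow_two hn α γ hr).symm).trans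
          (integral_comp_rpow_Ioi _ two_ne_zero)
    _ = _ := by
        rw [setIntegral_indicator measurableSet_Ioo, hIoo, integral_smul, betaIntegral,
          intervalIntegral.integral_of_le zero_le_one, integral_Ioc_eq_integral_Ioo]

lemma integrableOn_Ioo_pow_smul_one_sub_sq_cpow_mul_cpow {α γ : ℂ} (hn : 1 ≤ n)
    (hα : 0 < α.re) (hγ : 0 < ((n + γ) / 2).re) :
    IntegrableOn (fun r : ℝ => r ^ (n - 1) • ((1 - (r : ℂ) ^ 2) ^ (α - 1) * (r : ℂ) ^ γ))
      (Ioo 0 1) := by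
  have hIoo : Ioo 0 1 ∩ Ioi (0 : ℝ) = Ioo 0 1 := inter_eq_left.2 Ioo_subset_Ioi_self
  have hbeta : IntegrableOn
      (fun u : ℝ => (2 : ℝ)⁻¹ • ((u : ℂ) ^ ((n + γ) / 2 - 1) * (1 - (u : ℂ)) ^ (α - 1)))
      (Ioo 0 1) :=
    ((betaIntegral_convergent hγ hα).1.mono_set Ioo_subset_Ioc_self).smul ((2 : ℝ)⁻¹)
  rw [← hIoo, ← integrableOn_indicator_iff measurableSet_Ioo] at hbeta ⊢
  exact ((integrableOn_Ioi_comp_rpow_iff _ two_ne_zero).2 hbeta).congr_fun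
    (fun _ hr => smul_indicator_Ioo_comp_rpow_two hn α γ hr) measurableSet_Ioi

end BetaSubstitution

section RadialIntegral

variable {E : Type*} [NormedAddCommGroup E] [NormedSpace ℝ E] [FiniteDimensional ℝ E]
  [MeasurableSpace E] [BorelSpace E] [Nontrivial E] (μ : Measure E) [μ.IsAddHaarMeasure]

lemma closedBall_ae_eq_ball (x : E) (r : ℝ) : closedBall x r =ᵐ[μ] ball x r :=
  ae_eq_set.2 ⟨by rw [closedBall_sdiff_ball]; exact Measure.addHaar_sphere μ x r,
    by rw [sdiff_eq_empty.2 ball_subset_closedBall, measure_empty]⟩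

lemma integrableOn_closedBall_one_sub_norm_sq_cpow_mul_norm_cpow {α γ : ℂ} (hα : 0 < α.re)
    (hγ : 0 < ((Module.finrank ℝ E + γ) / 2).re) :
    IntegrableOn (fun y : E => (1 - (‖y‖ : ℂ) ^ 2) ^ (α - 1) * (‖y‖ : ℂ) ^ γ) (closedBall 0 1) μ :=
  ((integrableOn_fun_norm_addHaar μ
    (f := fun r : ℝ => (1 - (r : ℂ) ^ 2) ^ (α - 1) * (r : ℂ) ^ γ)).2
      (integrableOn_Ioo_pow_smul_one_sub_sq_cpow_mul_cpow Module.finrank_pos hα hγ)).congr_set_ae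
    (closedBall_ae_eq_ball μ 0 1)

lemma setIntegral_closedBall_one_sub_norm_sq_cpow_mul_norm_cpow (α γ : ℂ) :
    ∫ y in closedBall (0 : E) 1, (1 - (‖y‖ : ℂ) ^ 2) ^ (α - 1) * (‖y‖ : ℂ) ^ γ ∂μ
      = Module.finrank ℝ E • μ.real (ball 0 1) • (2 : ℝ)⁻¹ •
          betaIntegral ((Module.finrank ℝ E + γ) / 2) α := by
  set F : ℝ → ℂ := fun r => (1 - (r : ℂ) ^ 2) ^ (α - 1) * (r : ℂ) ^ γ
  have hball :
      (ball (0 : E) 1).indicator (fun y => F ‖y‖) = fun y => (Iio 1).indicator F ‖y‖ := by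
    ext y; simp [indicator]
  have hIoo : (Iio 1).indicator (fun r : ℝ => r ^ (Module.finrank ℝ E - 1) • F r)
      = fun r => r ^ (Module.finrank ℝ E - 1) • (Iio 1).indicator F r := by
    ext r; simp [indicator]
  rw [setIntegral_congr_set (closedBall_ae_eq_ball μ 0 1),
    ← integral_indicator measurableSet_ball, hball, integral_fun_norm_addHaar, ← hIoo,
    setIntegral_indicator measurableSet_Iio, Ioi_inter_Iio,
    integral_Ioo_pow_smul_one_sub_sq_cpow_mul_cpow Module.finrank_pos]

end RadialIntegral

def unitBallNormCpowI (E : Type*) [NormedAddCommGroup E] : E → ℂ :=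
  (closedBall (0 : E) 1).indicator fun u => (‖u‖ : ℂ) ^ I

section UnitBallNormCpowI

variable {E : Type*} [NormedAddCommGroup E]

lemma unitBallNormCpowI_of_norm_le {u : E} (hu : ‖u‖ ≤ 1) :
    unitBallNormCpowI E u = (‖u‖ : ℂ) ^ I :=
  indicator_of_mem (mem_closedBall_zero_iff.2 hu) _

lemma norm_ofReal_cpow_I_le_one {x : ℝ} (hx : 0 ≤ x) : ‖(x : ℂ) ^ I‖ ≤ 1 := by
  rcases hx.eq_or_lt with rfl | hx
  · simp [zero_cpow I_ne_zero]
  · simp [norm_cpow_eq_rpow_re_of_pos hx]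

lemma norm_unitBallNormCpowI_le_one (u : E) : ‖unitBallNormCpowI E u‖ ≤ 1 := by
  by_cases hu : ‖u‖ ≤ 1
  · rw [unitBallNormCpowI_of_norm_le hu]
    exact norm_ofReal_cpow_I_le_one (norm_nonneg u)
  · rw [unitBallNormCpowI, indicator_of_notMem (by simpa using hu)]
    simp

lemma eLpNorm_unitBallNormCpowI_le_one [MeasurableSpace E] (μ : Measure E) :
    eLpNorm (unitBallNormCpowI E) ∞ μ ≤ 1 := by
  simpa using eLpNorm_le_of_ae_bound (p := ∞) (ae_of_all μ norm_unitBallNormCpowI_le_one)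

lemma measurable_unitBallNormCpowI [MeasurableSpace E] [OpensMeasurableSpace E] :
    Measurable (unitBallNormCpowI E) :=
  ((measurable_ofReal.comp measurable_norm).pow_const I).indicator measurableSet_closedBall

lemma hasCompactSupport_unitBallNormCpowI [ProperSpace E] :
    HasCompactSupport (unitBallNormCpowI E) :=
  .intro (isCompact_closedBall 0 1) fun _ hu => indicator_of_notMem hu _

lemma continuousAt_unitBallNormCpowI {u : E} (hu0 : u ≠ 0) (hu1 : ‖u‖ < 1) :
    ContinuousAt (unitBallNormCpowI E) u := by
  have hball : ∀ᶠ v in 𝓝 u, (‖v‖ : ℂ) ^ I = unitBallNormCpowI E v :=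
    Filter.eventually_of_mem (isOpen_ball.mem_nhds (mem_ball_zero_iff.2 hu1)) fun v hv =>
      (unitBallNormCpowI_of_norm_le (mem_ball_zero_iff.1 hv).le).symm
  refine ContinuousAt.congr ?_ hball
  exact (continuousAt_cpow_const (ofReal_mem_slitPlane.2 (norm_pos_iff.2 hu0))).comp
    (f := fun v : E => (‖v‖ : ℂ)) (by fun_prop)

lemma unitBallNormCpowI_smul [NormedSpace ℝ E] {t : ℝ} (ht : 0 < t) (ht1 : t ≤ 1) {u : E}
    (hu : ‖u‖ ≤ 1) : unitBallNormCpowI E (t • u) = (t : ℂ) ^ I * unitBallNormCpowI E u := by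
  have htu : ‖t • u‖ = t * ‖u‖ := by rw [norm_smul, Real.norm_of_nonneg ht.le]
  rw [unitBallNormCpowI_of_norm_le hu, unitBallNormCpowI_of_norm_le
    (by rw [htu]; exact mul_le_one₀ ht1 (norm_nonneg u) hu), htu, ofReal_mul,
    mul_cpow_ofReal_nonneg ht.le (norm_nonneg u)]

lemma eLpNorm_unitBallNormCpowI_pos [NormedSpace ℝ E] [Nontrivial E] [MeasurableSpace E]
    [BorelSpace E] (μ : Measure E) [μ.IsOpenPosMeasure] :
    0 < eLpNorm (unitBallNormCpowI E) ∞ μ := by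
  refine pos_iff_ne_zero.2 fun h => ?_
  have hzero := (eLpNorm_eq_zero_iff measurable_unitBallNormCpowI.aestronglyMeasurable
    ENNReal.top_ne_zero).1 h
  obtain ⟨u, hu⟩ := exists_norm_eq E (by norm_num : (0 : ℝ) ≤ 1 / 2)
  obtain ⟨v, ⟨hv1, hv0⟩, hv⟩ := (Measure.dense_of_ae hzero).inter_open_nonempty
    (ball 0 1 \ {0}) (isOpen_ball.sdiff isClosed_singleton)
    ⟨u, mem_ball_zero_iff.2 (by rw [hu]; norm_num), by simp [← norm_pos_iff, hu]⟩
  change unitBallNormCpowI E v = 0 at hv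
  rw [unitBallNormCpowI_of_norm_le (mem_ball_zero_iff.1 hv1).le, cpow_eq_zero_iff] at hv
  exact hv0 (norm_eq_zero.1 (ofReal_eq_zero.1 hv.1))

end UnitBallNormCpowI

lemma betaIntegral_ne_zero {u v : ℂ} (hu : 0 < u.re) (hv : 0 < v.re) : betaIntegral u v ≠ 0 :=
  fun h => mul_ne_zero (Gamma_ne_zero_of_re_pos hu) (Gamma_ne_zero_of_re_pos hv) <| by
    rw [Gamma_mul_Gamma_eq_betaIntegral hu hv, h, mul_zero]

section SphAvg

variable {d : ℕ} {α : ℂ}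

lemma nontrivial_euclideanSpace (hd : 0 < d) : Nontrivial (EuclideanSpace ℝ (Fin d)) :=
  Module.nontrivial_of_finrank_pos (R := ℝ) (by simpa using hd)

lemma integrableOn_closedBall_one_sub_norm_sq_cpow (hd : 0 < d) (hα : 0 < α.re) :
    IntegrableOn (fun y : EuclideanSpace ℝ (Fin d) => (1 - (‖y‖ : ℂ) ^ 2) ^ (α - 1))
      (closedBall 0 1) := by
  have := nontrivial_euclideanSpace hd
  simpa using integrableOn_closedBall_one_sub_norm_sq_cpow_mul_norm_cpow volume hα
    (γ := 0) (by simpa using hd)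

lemma continuousAt_sphAvg (hd : 0 < d) (hα : 0 < α.re) {f : EuclideanSpace ℝ (Fin d) → ℂ}
    (hf : Measurable f) {M : ℝ} (hM : ∀ u, ‖f u‖ ≤ M) {t : ℝ} {x₀ : EuclideanSpace ℝ (Fin d)}
    (hcont : ∀ᵐ y ∂volume.restrict (closedBall 0 1), ContinuousAt f (x₀ - t • y)) :
    ContinuousAt (sphAvg d α f t) x₀ := by
  refine continuousAt_const.mul (continuousAt_of_dominated
    (bound := fun y => M * ‖(1 - (‖y‖ : ℂ) ^ 2) ^ (α - 1)‖) ?_ ?_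
    ((integrableOn_closedBall_one_sub_norm_sq_cpow hd hα).norm.const_mul M) ?_)
  · exact .of_forall fun x => by fun_prop
  · refine .of_forall fun x => .of_forall fun y => ?_
    rw [norm_mul, mul_comm]
    exact mul_le_mul_of_nonneg_right (hM _) (norm_nonneg _)
  · filter_upwards [hcont] with y hy
    exact continuousAt_const.mul (hy.comp (f := fun x => x - t • y) (by fun_prop))

lemma sphAvg_unitBallNormCpowI_zero {t : ℝ} (ht : 0 < t) (ht1 : t ≤ 1) :
    sphAvg d α (unitBallNormCpowI _) t 0
      = (t : ℂ) ^ I * sphAvg d α (unitBallNormCpowI _) 1 0 := by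
  rw [sphAvg, sphAvg, mul_left_comm]
  congr 1
  rw [← integral_const_mul]
  refine setIntegral_congr_fun measurableSet_closedBall fun y hy => ?_
  rw [zero_sub, zero_sub, one_smul, ← smul_neg,
    unitBallNormCpowI_smul ht ht1 (by simpa using hy)]
  ring

lemma sphAvg_unitBallNormCpowI_one_zero_ne_zero (hd : 0 < d) (hα : 0 < α.re) :
    sphAvg d α (unitBallNormCpowI _) 1 0 ≠ 0 := by
  have := nontrivial_euclideanSpace hd
  have hβ : 0 < ((d + I) / 2).re := by simpa using hd
  have hintegrand : ∀ y ∈ closedBall (0 : EuclideanSpace ℝ (Fin d)) 1,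
      (1 - (‖y‖ : ℂ) ^ 2) ^ (α - 1) * unitBallNormCpowI _ (0 - (1 : ℝ) • y)
        = (1 - (‖y‖ : ℂ) ^ 2) ^ (α - 1) * (‖y‖ : ℂ) ^ I := fun y hy => by
    rw [zero_sub, one_smul, unitBallNormCpowI_of_norm_le (by simpa using hy), norm_neg]
  rw [sphAvg, setIntegral_congr_fun measurableSet_closedBall hintegrand,
    setIntegral_closedBall_one_sub_norm_sq_cpow_mul_norm_cpow, finrank_euclideanSpace_fin]
  exact mul_ne_zero (inv_ne_zero (Gamma_ne_zero_of_re_pos hα)) <| smul_ne_zero hd.ne' <|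
    smul_ne_zero (ENNReal.toReal_pos (measure_ball_pos _ _ one_pos).ne'
      measure_ball_lt_top.ne).ne' <| smul_ne_zero (by norm_num) (betaIntegral_ne_zero hβ hα)

lemma continuousAt_sphAvg_unitBallNormCpowI_zero (hd : 0 < d) (hα : 0 < α.re) {t : ℝ}
    (ht : 0 < t) (ht1 : t < 1) : ContinuousAt (sphAvg d α (unitBallNormCpowI _) t) 0 := by
  have := nontrivial_euclideanSpace hd
  refine continuousAt_sphAvg hd hα measurable_unitBallNormCpowI
    norm_unitBallNormCpowI_le_one ?_
  filter_upwards [ae_restrict_mem measurableSet_closedBall,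
    ae_restrict_of_ae (Measure.ae_ne volume 0)] with y hy hy0
  refine continuousAt_unitBallNormCpowI (by simp [ht.ne', hy0]) ?_
  rw [zero_sub, norm_neg, norm_smul, Real.norm_of_nonneg ht.le]
  exact mul_lt_one_of_nonneg_of_lt_one_left ht.le ht1 (by simpa using hy)

lemma ofReal_exp_pi_cpow_I : ((Real.exp π : ℝ) : ℂ) ^ I = -1 := by
  rw [cpow_def_of_ne_zero (by exact_mod_cast (Real.exp_pos π).ne'),
    ← ofReal_log (Real.exp_pos π).le, Real.log_exp, exp_pi_mul_I]

lemma sphAvg_unitBallNormCpowI_exp_pi_mul_zero {t : ℝ} (ht : 0 < t)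
    (ht1 : Real.exp π * t ≤ 1) :
    sphAvg d α (unitBallNormCpowI _) (Real.exp π * t) 0
      = -sphAvg d α (unitBallNormCpowI _) t 0 := by
  rw [sphAvg_unitBallNormCpowI_zero (by positivity) ht1, sphAvg_unitBallNormCpowI_zero ht
    ((le_mul_of_one_le_left ht.le (Real.one_le_exp Real.pi_pos.le)).trans ht1), ofReal_mul,
    mul_cpow_ofReal_nonneg (Real.exp_pos π).le ht.le, ofReal_exp_pi_cpow_I]
  ring

lemma norm_sphAvg_unitBallNormCpowI_zero {t : ℝ} (ht : 0 < t) (ht1 : t ≤ 1) :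
    ‖sphAvg d α (unitBallNormCpowI _) t 0‖ = ‖sphAvg d α (unitBallNormCpowI _) 1 0‖ := by
  rw [sphAvg_unitBallNormCpowI_zero ht ht1, norm_mul, norm_cpow_eq_rpow_re_of_pos ht]
  simp

end SphAvg

lemma ofReal_rpow_mul_le_vqNorm {q : ℝ} (hq : 0 < q) {a : ℝ → ℂ} {L : ℕ}
    {t : Fin (L + 1) → ℝ} (ht : StrictMono t) (ht0 : ∀ i, 0 < t i) {k : ℝ} (hk : 0 ≤ k)
    (hjump : ∀ i : Fin L, k ≤ ‖a (t i.succ) - a (t i.castSucc)‖) :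
    ENNReal.ofReal ((L : ℝ) ^ (1 / q) * k) ≤ vqNorm q a := by
  refine le_iSup_of_le L <| le_iSup_of_le t <| le_iSup_of_le ht <| le_iSup_of_le ht0 <|
    ENNReal.ofReal_le_ofReal ?_
  calc (L : ℝ) ^ (1 / q) * k = (∑ _i : Fin L, k ^ q) ^ (1 / q) := by
        rw [Finset.sum_const, Finset.card_univ, Fintype.card_fin, nsmul_eq_mul,
          Real.mul_rpow (Nat.cast_nonneg L) (Real.rpow_nonneg hk q), ← Real.rpow_mul hk,
          mul_one_div_cancel hq.ne', Real.rpow_one]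
    _ ≤ _ := by
        gcongr with i
        exact hjump i

lemma le_essSup_of_eventually_nhds {X : Type*} [TopologicalSpace X] [MeasurableSpace X]
    {μ : Measure X} [μ.IsOpenPosMeasure] {g : X → ℝ≥0∞} {x₀ : X} {c : ℝ≥0∞}
    (h : ∀ᶠ x in 𝓝 x₀, c ≤ g x) : c ≤ essSup g μ := by
  by_contra! hlt
  have hnull : μ {x | c ≤ g x} = 0 := by
    simpa only [not_lt] using ae_iff.1 (ae_lt_of_essSup_lt hlt)
  exact (Measure.measure_pos_of_mem_nhds μ h).ne' hnull

def alternatingScales (L : ℕ) (j : Fin (L + 1)) : ℝ :=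
  Real.exp (π * ((j : ℝ) - (L + 1)))

lemma alternatingScales_pos (L : ℕ) (j : Fin (L + 1)) : 0 < alternatingScales L j :=
  Real.exp_pos _

lemma alternatingScales_lt_one (L : ℕ) (j : Fin (L + 1)) : alternatingScales L j < 1 := by
  have hj : (j : ℝ) < L + 1 := by exact_mod_cast j.isLt
  exact Real.exp_lt_one_iff.2 (mul_neg_of_pos_of_neg Real.pi_pos (by linarith))

lemma strictMono_alternatingScales (L : ℕ) : StrictMono (alternatingScales L) := fun i j hij =>
  Real.exp_lt_exp.2 (mul_lt_mul_of_pos_left (by simpa using hij) Real.pi_pos)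

lemma alternatingScales_succ {L : ℕ} (i : Fin L) :
    alternatingScales L i.succ = Real.exp π * alternatingScales L i.castSucc := by
  rw [alternatingScales, alternatingScales, ← Real.exp_add, Fin.val_succ, Fin.val_castSucc]
  push_cast
  ring_nf

lemma eventually_nhds_zero_le_norm_sphAvg_alternatingScales_sub {d : ℕ} (hd : 0 < d) {α : ℂ}
    (hα : 0 < α.re) (L : ℕ) :
    ∀ᶠ x in 𝓝 0, ∀ i : Fin L, ‖sphAvg d α (unitBallNormCpowI _) 1 0‖ ≤
      ‖sphAvg d α (unitBallNormCpowI _) (alternatingScales L i.succ) x -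
        sphAvg d α (unitBallNormCpowI _) (alternatingScales L i.castSucc) x‖ := by
  refine Filter.eventually_all.2 fun i => ?_
  have hcont := fun j => continuousAt_sphAvg_unitBallNormCpowI_zero (α := α) hd hα
    (alternatingScales_pos L j) (alternatingScales_lt_one L j)
  have hsucc := alternatingScales_succ i ▸ (alternatingScales_lt_one L i.succ).le
  have hk : 0 < ‖sphAvg d α (unitBallNormCpowI _) 1 0‖ :=
    norm_pos_iff.2 (sphAvg_unitBallNormCpowI_one_zero_ne_zero hd hα)
  have hjump : ‖sphAvg d α (unitBallNormCpowI _) (alternatingScales L i.succ) 0 -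
        sphAvg d α (unitBallNormCpowI _) (alternatingScales L i.castSucc) 0‖
      = 2 * ‖sphAvg d α (unitBallNormCpowI _) 1 0‖ := by
    rw [alternatingScales_succ, sphAvg_unitBallNormCpowI_exp_pi_mul_zero
      (alternatingScales_pos L _) hsucc, ← neg_add', norm_neg, ← two_mul, norm_mul,
      norm_sphAvg_unitBallNormCpowI_zero (alternatingScales_pos L _)
        (alternatingScales_lt_one L _).le, Complex.norm_two]
  exact (continuousAt_const.eventually_lt ((hcont i.succ).sub (hcont i.castSucc)).norm
    (by rw [Pi.sub_apply, hjump]; linarith)).mono fun _ => le_of_lt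

theorem variation_unbounded_Linfty_general (d : ℕ) (hd : 2 ≤ d) (q : ℝ) (hq1 : 2 < q)
    (α : ℂ) (hα : 0 < α.re) :
    ∀ C > 0, ∃ f : EuclideanSpace ℝ (Fin d) → ℂ,
      Measurable f ∧ HasCompactSupport f ∧ (∃ M : ℝ, ∀ x, ‖f x‖ ≤ M) ∧
      0 < eLpNorm f ∞ volume ∧
      ENNReal.ofReal C * eLpNorm f ∞ volume <
        essSup (fun x => vqNorm q (fun t => sphAvg d α f t x)) volume := by
  intro C hC
  have hd0 : 0 < d := by omega
  have hq : 0 < q := by linarith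
  have := nontrivial_euclideanSpace hd0
  set f := unitBallNormCpowI (EuclideanSpace ℝ (Fin d))
  set k := ‖sphAvg d α f 1 0‖
  obtain ⟨L, hL⟩ : ∃ L : ℕ, C / k < (L : ℝ) ^ (1 / q) :=
    ((tendsto_rpow_atTop (one_div_pos.2 hq)).comp
      tendsto_natCast_atTop_atTop).eventually_gt_atTop _ |>.exists
  have hk : 0 < k := norm_pos_iff.2 (sphAvg_unitBallNormCpowI_one_zero_ne_zero hd0 hα)
  refine ⟨f, measurable_unitBallNormCpowI, hasCompactSupport_unitBallNormCpowI,
    ⟨1, norm_unitBallNormCpowI_le_one⟩, eLpNorm_unitBallNormCpowI_pos volume, ?_⟩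
  calc ENNReal.ofReal C * eLpNorm f ∞ volume ≤ ENNReal.ofReal C :=
        mul_le_of_le_one_right' (eLpNorm_unitBallNormCpowI_le_one volume)
    _ < ENNReal.ofReal ((L : ℝ) ^ (1 / q) * k) :=
        (ENNReal.ofReal_lt_ofReal_iff_of_nonneg hC.le).2 ((div_lt_iff₀ hk).1 hL)
    _ ≤ _ := le_essSup_of_eventually_nhds <|
        (eventually_nhds_zero_le_norm_sphAvg_alternatingScales_sub hd0 hα L).mono fun _ hx =>
          ofReal_rpow_mul_le_vqNorm hq (strictMono_alternatingScales L)
            (alternatingScales_pos L) hk.le hx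

theorem variation_unbounded_Linfty (d : ℕ) (hd : 2 ≤ d) (q : ℝ) (hq1 : 2 < q)
    (α : ℂ) (hα : 0 < α.re) (hα1 : α ≠ 1) :
    ∀ C > 0, ∃ f : EuclideanSpace ℝ (Fin d) → ℂ,
      Measurable f ∧ HasCompactSupport f ∧ (∃ M : ℝ, ∀ x, ‖f x‖ ≤ M) ∧
      0 < eLpNorm f ∞ volume ∧
      ENNReal.ofReal C * eLpNorm f ∞ volume <
        essSup (fun x => vqNorm q (fun t => sphAvg d α f t x)) volume :=
  variation_unbounded_Linfty_general d hd q hq1 α hα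
end
end

section
/- Let q ∈ [1, ∞). There exists a constant C > 0 depending only on q such that for every continuously differentiable function F : (0, ∞) → ℂ, the q-variation norm of {F(t)}_{t>0} satisfies ‖{F(t)}_{t>0}‖_{v_q} ≤ C (∫_0^∞ |F(t)|^q dt)^{(1−1/q)/q} (∫_0^∞ |F′(t)|^q dt)^{1/q²}, i.e. ‖{F(t)}_{t>0}‖_{v_q} ≤ C ‖F‖_{L^q(0,∞)}^{1/q′} ‖F′‖_{L^q(0,∞)}^{1/q} where 1/q + 1/q′ = 1. -/
/-!
On an interval `[a, b]` put `A = ‖F‖_{L^q(a,b)}` and `B = ‖F'‖_{L^q(a,b)}`. By the fundamental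
theorem of calculus and Hölder's inequality `‖F y - F x‖ ≤ (y - x)^{1-1/q} B` on `[a, b]`, and every
subinterval of length `l` contains a point where `‖F‖ ≤ A l^{-1/q}`. If `(b - a) B ≤ A` the first
bound alone gives `‖F b - F a‖ ≤ A^{1-1/q} B^{1/q}`; otherwise one passes from `a` and from `b` to
such small values inside windows of length `l = A / B`, which gives `4 A^{1-1/q} B^{1/q}`.
Raising this to the power `q`, summing over the intervals of a partition and applying Hölder's
inequality for sums with the exponents `q / (q - 1)` and `q` bounds the `q`-variation sum, because
`q`-th powers of `L^q` norms add up over disjoint intervals.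
-/

noncomputable section
open MeasureTheory Complex
open scoped ENNReal NNReal

open Set Function

theorem ENNReal.sum_rpow_one_sub_mul_rpow_le {ι : Type*} (s : Finset ι) (u v : ι → ℝ≥0∞) {θ : ℝ}
    (hθ0 : 0 < θ) (hθ1 : θ ≤ 1) :
    ∑ i ∈ s, u i ^ (1 - θ) * v i ^ θ ≤ (∑ i ∈ s, u i) ^ (1 - θ) * (∑ i ∈ s, v i) ^ θ := by
  obtain rfl | hθ1 := hθ1.eq_or_lt
  · simp
  have hholder := ENNReal.inner_le_Lp_mul_Lq s (fun i => u i ^ (1 - θ)) (fun i => v i ^ θ)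
    (Real.HolderConjugate.one_sub_inv_inv hθ0 hθ1)
  have hθ : θ ≠ 0 := hθ0.ne'
  have hθ' : 1 - θ ≠ 0 := (sub_pos.2 hθ1).ne'
  simpa only [← ENNReal.rpow_mul, mul_inv_cancel₀ hθ, mul_inv_cancel₀ hθ', ENNReal.rpow_one,
    one_div, inv_inv] using hholder

theorem ENNReal.mul_rpow_mul_rpow_rpow (c A B : ℝ≥0∞) (α β : ℝ) {r : ℝ} (hr : 0 ≤ r) :
    (c * A ^ α * B ^ β) ^ r = c ^ r * (A ^ r) ^ α * (B ^ r) ^ β := by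
  simp only [ENNReal.mul_rpow_of_nonneg _ _ hr, ← ENNReal.rpow_mul, mul_comm r]

section WindowArgument

variable {E : Type*} [SeminormedAddCommGroup E] {F : ℝ → E} {a b θ A B : ℝ}

theorem norm_sub_le_two_mul_of_rpow_modulus_of_small_value (hθ1 : θ ≤ 1) (hB : 0 ≤ B)
    (hmod : ∀ x y, a ≤ x → x ≤ y → y ≤ b → ‖F y - F x‖ ≤ (y - x) ^ (1 - θ) * B)
    (hsmall : ∀ x y, a ≤ x → x < y → y ≤ b → ∃ s ∈ Icc x y, ‖F s‖ * (y - x) ^ θ ≤ A)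
    {l : ℝ} (hl : 0 < l) (hlb : l ≤ b - a) :
    ‖F b - F a‖ ≤ 2 * (l ^ (1 - θ) * B + A / l ^ θ) := by
  have hθ' : 0 ≤ 1 - θ := sub_nonneg.2 hθ1
  have hlθ : 0 < l ^ θ := Real.rpow_pos_of_pos hl θ
  obtain ⟨s, ⟨has, hsl⟩, hs⟩ := hsmall a (a + l) le_rfl (by linarith) (by linarith)
  obtain ⟨s', ⟨hls', hs'b⟩, hs'⟩ := hsmall (b - l) b (by linarith) (by linarith) le_rfl
  simp only [add_sub_cancel_left, sub_sub_cancel, ← le_div_iff₀ hlθ] at hs hs'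
  have hleft : ‖F s - F a‖ ≤ l ^ (1 - θ) * B := (hmod a s le_rfl has (by linarith)).trans
    (by gcongr; linarith)
  have hright : ‖F b - F s'‖ ≤ l ^ (1 - θ) * B := (hmod s' b (by linarith) hs'b le_rfl).trans
    (by gcongr; linarith)
  calc ‖F b - F a‖ = ‖(F b - F s') + (F s' - F s) + (F s - F a)‖ := by abel_nf
    _ ≤ ‖F b - F s'‖ + (‖F s'‖ + ‖F s‖) + ‖F s - F a‖ :=
        (norm_add₃_le).trans (by gcongr; exact norm_sub_le _ _)
    _ ≤ 2 * (l ^ (1 - θ) * B + A / l ^ θ) := by linarith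


theorem norm_sub_le_four_mul_of_rpow_modulus_of_small_value_of_pos (hθ1 : θ ≤ 1)
    (hab : a < b) (hA : 0 < A) (hB : 0 ≤ B)
    (hmod : ∀ x y, a ≤ x → x ≤ y → y ≤ b → ‖F y - F x‖ ≤ (y - x) ^ (1 - θ) * B)
    (hsmall : ∀ x y, a ≤ x → x < y → y ≤ b → ∃ s ∈ Icc x y, ‖F s‖ * (y - x) ^ θ ≤ A) :
    ‖F b - F a‖ ≤ 4 * A ^ (1 - θ) * B ^ θ := by
  have hθ' : 0 ≤ 1 - θ := sub_nonneg.2 hθ1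
  have hsplit : B = B ^ (1 - θ) * B ^ θ := by
    rw [← Real.rpow_add' hB (by norm_num), sub_add_cancel, Real.rpow_one]
  by_cases hshort : (b - a) * B ≤ A
  · calc ‖F b - F a‖ ≤ (b - a) ^ (1 - θ) * B := hmod a b le_rfl hab.le le_rfl
      _ = ((b - a) * B) ^ (1 - θ) * B ^ θ := by
          rw [Real.mul_rpow (by linarith) hB, mul_assoc, ← hsplit]
      _ ≤ A ^ (1 - θ) * B ^ θ := by gcongr
      _ ≤ 4 * A ^ (1 - θ) * B ^ θ := by
          have : 0 ≤ A ^ (1 - θ) * B ^ θ := by positivity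
          linarith
  -- windows of length `A / B` make the two terms of the window bound equal
  have hBpos : 0 < B := by
    by_contra! h
    exact hshort (by nlinarith)
  have hl : 0 < A / B := div_pos hA hBpos
  have hlb : A / B ≤ b - a := by
    rw [div_le_iff₀ hBpos]; linarith
  refine (norm_sub_le_two_mul_of_rpow_modulus_of_small_value hθ1 hB hmod hsmall hl hlb).trans_eq ?_
  rw [Real.div_rpow hA.le hB, Real.div_rpow hA.le hB]
  have h1 : (A ^ (1 - θ) / B ^ (1 - θ)) * B = A ^ (1 - θ) * B ^ θ := by
    nth_rw 2 [hsplit]; field_simp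
  have h2 : A / (A ^ θ / B ^ θ) = A ^ (1 - θ) * B ^ θ := by
    rw [Real.rpow_sub hA, Real.rpow_one]; field_simp
  rw [h1, h2]; ring

theorem norm_sub_le_four_mul_of_rpow_modulus_of_small_value (hθ1 : θ ≤ 1)
    (hab : a < b) (hA : 0 ≤ A) (hB : 0 ≤ B)
    (hmod : ∀ x y, a ≤ x → x ≤ y → y ≤ b → ‖F y - F x‖ ≤ (y - x) ^ (1 - θ) * B)
    (hsmall : ∀ x y, a ≤ x → x < y → y ≤ b → ∃ s ∈ Icc x y, ‖F s‖ * (y - x) ^ θ ≤ A) :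
    ‖F b - F a‖ ≤ 4 * A ^ (1 - θ) * B ^ θ := by
  -- at `A = 0` the window length `A / B` degenerates, so approach `A` from above
  have hcont : ContinuousWithinAt (fun A' : ℝ => 4 * A' ^ (1 - θ) * B ^ θ) (Ioi A) A :=
    (((Real.continuous_rpow_const (sub_nonneg.2 hθ1)).const_mul 4).mul_const _).continuousWithinAt
  refine ge_of_tendsto hcont (eventually_nhdsWithin_of_forall fun A' (hA' : A < A') => ?_)
  refine norm_sub_le_four_mul_of_rpow_modulus_of_small_value_of_pos hθ1 hab (hA.trans_lt hA') hB
    hmod fun x y hx hxy hy => ?_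
  obtain ⟨s, hs, hsA⟩ := hsmall x y hx hxy hy
  exact ⟨s, hs, hsA.trans hA'.le⟩

end WindowArgument

section SobolevBound

variable {E : Type*} [NormedAddCommGroup E] {F : ℝ → E} {x y : ℝ}

theorem enorm_sub_le_eLpNorm_deriv_mul [NormedSpace ℝ E] [CompleteSpace E] {U : Set ℝ}
    (hU : IsOpen U) (hF : ContDiffOn ℝ 1 F U) (hxy : x ≤ y) (hsub : Icc x y ⊆ U) {p : ℝ≥0∞}
    (hp : 1 ≤ p) :
    ‖F y - F x‖ₑ ≤ eLpNorm (deriv F) p (volume.restrict (Ioc x y)) *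
      ENNReal.ofReal (y - x) ^ (1 - 1 / p.toReal) := by
  have hderiv : ∀ t ∈ uIcc x y, HasDerivAt F (deriv F t) t := fun t ht =>
    ((hF.differentiableOn one_ne_zero).differentiableAt
      (hU.mem_nhds (hsub (uIcc_of_le hxy ▸ ht)))).hasDerivAt
  have hint : IntervalIntegrable (deriv F) volume x y :=
    ((hF.continuousOn_deriv_of_isOpen hU le_rfl).mono (uIcc_of_le hxy ▸ hsub)).intervalIntegrable
  calc ‖F y - F x‖ₑ = ‖∫ t in Ioc x y, deriv F t‖ₑ := by
        rw [← intervalIntegral.integral_of_le hxy,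
          intervalIntegral.integral_eq_sub_of_hasDerivAt hderiv hint]
    _ ≤ eLpNorm (deriv F) 1 (volume.restrict (Ioc x y)) := by
        rw [eLpNorm_one_eq_lintegral_enorm]; exact enorm_integral_le_lintegral_enorm _
    _ ≤ _ := by
        simpa [Real.volume_Ioc] using eLpNorm_le_eLpNorm_mul_rpow_measure_univ hp
          hint.1.aestronglyMeasurable

theorem exists_enorm_mul_le_eLpNorm (hF : ContinuousOn F (Icc x y)) (hxy : x < y)
    {p : ℝ≥0∞} (hp : p ≠ 0) :
    ∃ s ∈ Icc x y, ‖F s‖ₑ * ENNReal.ofReal (y - x) ^ (1 / p.toReal) ≤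
      eLpNorm F p (volume.restrict (Ioc x y)) := by
  obtain ⟨s, hs, hmin⟩ := isCompact_Icc.exists_isMinOn (nonempty_Icc.2 hxy.le) hF.norm
  refine ⟨s, hs, ?_⟩
  have hμ : volume.restrict (Ioc x y) ≠ 0 := by simp [hxy]
  calc ‖F s‖ₑ * ENNReal.ofReal (y - x) ^ (1 / p.toReal)
      = eLpNorm (fun _ => F s) p (volume.restrict (Ioc x y)) := by
        simp [eLpNorm_const _ hp hμ, Real.volume_Ioc]
    _ ≤ eLpNorm F p (volume.restrict (Ioc x y)) :=
        eLpNorm_mono_ae <| ae_restrict_of_forall_mem measurableSet_Ioc fun t ht =>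
          by simpa using hmin (Ioc_subset_Icc_self ht)

theorem ContinuousOn.eLpNorm_restrict_Ioc_lt_top (hF : ContinuousOn F (Icc x y)) (p : ℝ≥0∞) :
    eLpNorm F p (volume.restrict (Ioc x y)) < ⊤ := by
  obtain ⟨C, hC⟩ := isCompact_Icc.exists_bound_of_continuousOn hF
  refine (eLpNorm_le_of_ae_bound (C := C) (ae_restrict_of_forall_mem measurableSet_Ioc
    fun t ht => hC t (Ioc_subset_Icc_self ht))).trans_lt ?_
  simp [ENNReal.mul_lt_top_iff, Real.volume_Ioc, ENNReal.rpow_lt_top_of_nonneg]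

theorem enorm_sub_le_eLpNorm_rpow_mul_eLpNorm_deriv_rpow [NormedSpace ℝ E] [CompleteSpace E]
    {U : Set ℝ} (hU : IsOpen U) (hF : ContDiffOn ℝ 1 F U) (hxy : x < y) (hsub : Icc x y ⊆ U)
    {q : ℝ} (hq : 1 ≤ q) :
    ‖F y - F x‖ₑ ≤ 4 * eLpNorm F (.ofReal q) (volume.restrict (Ioc x y)) ^ (1 - 1 / q) *
      eLpNorm (deriv F) (.ofReal q) (volume.restrict (Ioc x y)) ^ (1 / q) := by
  set A := eLpNorm F (.ofReal q) (volume.restrict (Ioc x y))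
  set B := eLpNorm (deriv F) (.ofReal q) (volume.restrict (Ioc x y))
  have hA : A ≠ ⊤ := ((hF.continuousOn.mono hsub).eLpNorm_restrict_Ioc_lt_top _).ne
  have hB : B ≠ ⊤ :=
    (((hF.continuousOn_deriv_of_isOpen hU le_rfl).mono hsub).eLpNorm_restrict_Ioc_lt_top _).ne
  have hq0 : 0 < q := by linarith
  have hθ : 0 ≤ 1 - 1 / q := sub_nonneg.2 (div_le_one_of_le₀ hq hq0.le)
  have hqp : (ENNReal.ofReal q).toReal = q := ENNReal.toReal_ofReal hq0.le
  have hmono {a b : ℝ} (hxa : x ≤ a) (hby : b ≤ y) (G : ℝ → E) :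
      eLpNorm G (.ofReal q) (volume.restrict (Ioc a b)) ≤
        eLpNorm G (.ofReal q) (volume.restrict (Ioc x y)) :=
    eLpNorm_mono_measure _ (Measure.restrict_mono (Ioc_subset_Ioc hxa hby) le_rfl)
  have hmod (a b : ℝ) (hxa : x ≤ a) (hab : a ≤ b) (hby : b ≤ y) :
      ‖F b - F a‖ ≤ (b - a) ^ (1 - 1 / q) * B.toReal := by
    have h : ‖F b - F a‖ₑ ≤ B * ENNReal.ofReal (b - a) ^ (1 - 1 / q) := by
      calc _ ≤ _ := enorm_sub_le_eLpNorm_deriv_mul hU hF hab ((Icc_subset_Icc hxa hby).trans hsub)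
            (p := .ofReal q) (by simpa using hq)
        _ ≤ _ := by rw [hqp]; gcongr; exact hmono hxa hby _
    simpa [← ENNReal.toReal_rpow, mul_comm, sub_nonneg.2 hab] using
      ENNReal.toReal_mono (ENNReal.mul_ne_top hB (ENNReal.rpow_ne_top_of_nonneg hθ (by simp))) h
  have hsmall (a b : ℝ) (hxa : x ≤ a) (hab : a < b) (hby : b ≤ y) :
      ∃ s ∈ Icc a b, ‖F s‖ * (b - a) ^ (1 / q) ≤ A.toReal := by
    obtain ⟨s, hs, h⟩ := exists_enorm_mul_le_eLpNorm
      ((hF.continuousOn.mono hsub).mono (Icc_subset_Icc hxa hby)) hab (p := .ofReal q)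
      (by simpa using hq0)
    rw [hqp] at h
    refine ⟨s, hs, ?_⟩
    simpa [← ENNReal.toReal_rpow, sub_nonneg.2 hab.le] using
      ENNReal.toReal_mono hA (h.trans (hmono hxa hby F))
  have hreal := norm_sub_le_four_mul_of_rpow_modulus_of_small_value
    (div_le_one_of_le₀ hq hq0.le) hxy ENNReal.toReal_nonneg ENNReal.toReal_nonneg hmod hsmall
  rw [← ENNReal.toReal_le_toReal (by simp) (ENNReal.mul_ne_top (ENNReal.mul_ne_top (by simp)
    (ENNReal.rpow_ne_top_of_nonneg hθ hA)) (ENNReal.rpow_ne_top_of_nonneg (by positivity) hB))]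
  simpa [← ENNReal.toReal_rpow] using hreal

theorem sum_eLpNorm_restrict_rpow_le {α ι : Type*} [MeasurableSpace α] [Fintype ι]
    {μ : Measure α} (f : α → E) {s : ι → Set α} {t : Set α} (hs : ∀ i, MeasurableSet (s i))
    (hd : Pairwise (Disjoint on s)) (hst : ∀ i, s i ⊆ t) {p : ℝ≥0} (hp : p ≠ 0) :
    ∑ i, eLpNorm f p (μ.restrict (s i)) ^ (p : ℝ) ≤ eLpNorm f p (μ.restrict t) ^ (p : ℝ) := by
  simp only [eLpNorm_nnreal_pow_eq_lintegral hp]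
  rw [← tsum_fintype (L := .unconditional ι), ← lintegral_iUnion hs hd]
  exact lintegral_mono_set (iUnion_subset hst)

theorem ofReal_sum_norm_rpow_rpow {ι : Type*} (s : Finset ι) (v : ι → E) {q : ℝ} (hq : 0 < q) :
    ENNReal.ofReal ((∑ i ∈ s, ‖v i‖ ^ q) ^ (1 / q)) = (∑ i ∈ s, ‖v i‖ₑ ^ q) ^ (1 / q) := by
  rw [← ENNReal.ofReal_rpow_of_nonneg (by positivity) (by positivity),
    ENNReal.ofReal_sum_of_nonneg fun i _ => by positivity]
  congr 1
  refine Finset.sum_congr rfl fun i _ => ?_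
  rw [← ofReal_norm, ENNReal.ofReal_rpow_of_nonneg (norm_nonneg _) hq.le]

theorem sum_enorm_sub_rpow_rpow_le [NormedSpace ℝ E] [CompleteSpace E] {U : Set ℝ}
    (hU : IsOpen U) (hF : ContDiffOn ℝ 1 F U) {q : ℝ} (hq : 1 ≤ q) {L : ℕ}
    {t : Fin (L + 1) → ℝ} (ht : StrictMono t) (htU : Icc (t 0) (t (Fin.last L)) ⊆ U) :
    (∑ i : Fin L, ‖F (t i.succ) - F (t i.castSucc)‖ₑ ^ q) ^ (1 / q) ≤
      4 * eLpNorm F (.ofReal q) (volume.restrict U) ^ (1 - 1 / q) *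
        eLpNorm (deriv F) (.ofReal q) (volume.restrict U) ^ (1 / q) := by
  have hq0 : 0 < q := by linarith
  -- `ENNReal.ofReal q` is `↑q.toNNReal` by definition
  set p : ℝ≥0 := q.toNNReal
  have hpq : (p : ℝ) = q := Real.coe_toNNReal q hq0.le
  have hp : p ≠ 0 := by simpa [p] using hq0
  set I : Fin L → Set ℝ := fun i => Ioc (t i.castSucc) (t i.succ)
  have hIU (i : Fin L) : Icc (t i.castSucc) (t i.succ) ⊆ U :=
    (Icc_subset_Icc (ht.monotone (Fin.zero_le _)) (ht.monotone (Fin.le_last _))).trans htU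
  have hdisj : Pairwise (Disjoint on I) := (pairwise_disjoint_on I).2 fun i j hij =>
    Ioc_disjoint_Ioc_of_le (ht.monotone (Fin.succ_le_castSucc_iff.2 hij))
  have hsum (G : ℝ → E) := sum_eLpNorm_restrict_rpow_le G (fun i => measurableSet_Ioc) hdisj
    (fun i => Ioc_subset_Icc_self.trans (hIU i)) hp (μ := volume)
  have hlocal (i : Fin L) := ENNReal.rpow_le_rpow (enorm_sub_le_eLpNorm_rpow_mul_eLpNorm_deriv_rpow
    hU hF (ht (Fin.castSucc_lt_succ (i := i))) (hIU i) hq) hq0.le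
  simp only [ENNReal.mul_rpow_mul_rpow_rpow _ _ _ _ _ hq0.le] at hlocal
  rw [hpq] at hsum
  calc (∑ i : Fin L, ‖F (t i.succ) - F (t i.castSucc)‖ₑ ^ q) ^ (1 / q)
      ≤ (4 ^ q * ∑ i, (eLpNorm F (.ofReal q) (volume.restrict (I i)) ^ q) ^ (1 - 1 / q) *
          (eLpNorm (deriv F) (.ofReal q) (volume.restrict (I i)) ^ q) ^ (1 / q)) ^ (1 / q) := by
        rw [Finset.mul_sum]; gcongr with i; simpa only [mul_assoc] using hlocal i
    _ ≤ (4 ^ q * ((eLpNorm F (.ofReal q) (volume.restrict U) ^ q) ^ (1 - 1 / q) *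
          (eLpNorm (deriv F) (.ofReal q) (volume.restrict U) ^ q) ^ (1 / q))) ^ (1 / q) := by
        gcongr
        refine (ENNReal.sum_rpow_one_sub_mul_rpow_le _ _ _ (by positivity)
          (div_le_one_of_le₀ hq hq0.le)).trans ?_
        gcongr
        exacts [sub_nonneg.2 (div_le_one_of_le₀ hq hq0.le), hsum F, hsum (deriv F)]
    _ = _ := by
        rw [← mul_assoc, ENNReal.mul_rpow_mul_rpow_rpow _ _ _ _ _ (by positivity)]
        simp only [one_div, ENNReal.rpow_rpow_inv hq0.ne']

end SobolevBound

theorem variation_sobolev_embedding (q : ℝ) (hq : 1 ≤ q) :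
    ∃ C > 0, ∀ F : ℝ → ℂ, ContDiffOn ℝ 1 F (Set.Ioi 0) →
      vqNorm q F ≤ ENNReal.ofReal C *
        eLpNorm F (ENNReal.ofReal q) (volume.restrict (Set.Ioi 0)) ^ (1 - 1 / q) *
        eLpNorm (deriv F) (ENNReal.ofReal q) (volume.restrict (Set.Ioi 0)) ^ (1 / q) := by
  refine ⟨4, by norm_num, fun F hF => ?_⟩
  refine iSup_le fun L => iSup_le fun t => iSup_le fun ht => iSup_le fun htpos => ?_
  rw [ofReal_sum_norm_rpow_rpow _ _ (by linarith), ENNReal.ofReal_ofNat]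
  exact sum_enorm_sub_rpow_rpow_le isOpen_Ioi hF hq ht fun s hs => (htpos 0).trans_le hs.1
end
end
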